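/- Let a, b ≥ 2 be integers. Take R = ℂ[u_0,…,u_{a−1}][u_a, u_a^{−1}] (a ℚ-algebra) with u_0, …, u_a the standard generators, and define v_m(Y) ∈ R[Y] by the recursion in the context. Then for every integer m ≥ 0, the polynomial (−1)^m · m! · v_m(Y) is (bm+1)-triangular of degree (ab−1)m + a. -/

import Mathlib

open Polynomial

noncomputable section

/-- The ring `R = ℂ[u₀,…,u_{a−1}][u_a, u_a⁻¹]`: Laurent polynomials in `u_a`
over the polynomial ring `ℂ[u₀,…,u_{a−1}]`. -/
abbrev LaurentRing (a : ℕ) : Type := LaurentPolynomial (MvPolynomial (Fin a) ℂ)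

/-- The generators `u_0, …, u_a` of `R`; `u i` for `i < a` is the polynomial variable `u_i`,
and `u a` is the Laurent variable `u_a`. -/
noncomputable def u (a : ℕ) (i : ℕ) : LaurentRing a :=
  if h : i < a then LaurentPolynomial.C (MvPolynomial.X (⟨i, h⟩ : Fin a))
  else LaurentPolynomial.T 1

/-- `P ∈ R[Y]` is `m`-triangular of degree `d` if `deg P = d ≥ a` and for `d − a ≤ l ≤ d`
one has `p_l = q_l u_a^{m−1} u_{a−d+l} + P_l` with `q_l ∈ ℚ`, `q_l > 0`, and
`P_l ∈ ℂ[u_{a−d+l+1},…,u_a]`; for `l = d` this means `p_d = q_d u_a^m`. -/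
def IsTriangular (a m d : ℕ) (P : Polynomial (LaurentRing a)) : Prop :=
  P.natDegree = d ∧ a ≤ d ∧
  (∃ q : ℚ, 0 < q ∧ P.coeff d = algebraMap ℚ (LaurentRing a) q * (u a a) ^ m) ∧
  (∀ l, d - a ≤ l → l < d →
    ∃ (q : ℚ) (Pl : LaurentRing a), 0 < q ∧
      Pl ∈ Algebra.adjoin ℂ (u a '' {i : ℕ | a - (d - l) + 1 ≤ i ∧ i ≤ a}) ∧
      P.coeff l = algebraMap ℚ (LaurentRing a) q *
        ((u a a) ^ (m - 1) * u a (a - (d - l))) + Pl)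


/-- The polynomial `U(Y) = Σ_{j=0}^{a} u_j Y^j ∈ R[Y]`. -/
noncomputable def Upoly (a : ℕ) : Polynomial (LaurentRing a) :=
  ∑ j ∈ Finset.range (a + 1), Polynomial.C (u a j) * Polynomial.X ^ j

/-- The polynomials `v_m`: `v_0 = U` and
`v_m = −Σ_{j=1}^{m} (U^{bj}/j!)·v_{m−j}^{(j)}` for `m ≥ 1`. -/
noncomputable def vpoly {R : Type*} [CommRing R] [Algebra ℚ R]
    (b : ℕ) (U : Polynomial R) : ℕ → Polynomial R
  | 0 => U
  | m + 1 =>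
      -∑ j ∈ Finset.range (m + 1),
        Polynomial.C (algebraMap ℚ R (1 / ((j + 1).factorial : ℚ))) * U ^ (b * (j + 1)) *
          Polynomial.derivative^[j + 1] (vpoly b U (m - j))
  decreasing_by exact Nat.lt_succ_of_le (Nat.sub_le m j)

/-!
Substituting `v_m = (-1)^m / (m! (bm+1)) · D^m (U^{bm+1})` into the recursion reduces it to the
vanishing of the `(m+1)`-fold commutator of `D^m` with multiplication by `U^b`. Hence
`(-1)^m m! v_m = D^m (U^N) / N` with `N = bm+1`, whose coefficient of `Y^l` is `(l+m)_m / N` times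
the coefficient of `Y^{l+m}` in `U^N`. The top coefficient of `U^N` is `u_a^N`, and for
`1 ≤ k ≤ a` the coefficient of `Y^{aN-k}` is `N u_a^{N-1} u_{a-k}` plus a polynomial in
`u_{a-k+1}, …, u_a`.
-/

open Finset
open scoped Nat

section IterCommutator

variable {S : Type*} [CommRing S]

/-- The iterated commutator `[[D^k, g], …, g]` with `n` brackets, `D` the derivative and `g`
acting by multiplication, applied to `h`. -/
def iterCommutator (g h : S[X]) (n k : ℕ) : S[X] :=
  ∑ p ∈ antidiagonal n,
    (n.choose p.1 : S[X]) * ((-1) ^ p.1 * g ^ p.1 * derivative^[k] (g ^ p.2 * h))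

theorem iterCommutator_succ (g h : S[X]) (n k : ℕ) :
    iterCommutator g h (n + 1) k = iterCommutator g (g * h) n k - g * iterCommutator g h n k := by
  rw [iterCommutator, iterCommutator, iterCommutator,
    sum_antidiagonal_choose_succ_mul fun i j => (-1) ^ i * g ^ i * derivative^[k] (g ^ j * h),
    mul_sum, ← sub_neg_eq_add, ← sum_neg_distrib]
  congr 1
  · refine sum_congr rfl fun p _ => ?_
    rw [pow_succ, mul_assoc (g ^ p.2), mul_assoc]
  · refine sum_congr rfl fun p hp => ?_
    rw [Nat.choose_symm_of_eq_add (mem_antidiagonal.mp hp).symm]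
    ring

theorem iterCommutator_mul (g h : S[X]) (n k : ℕ) :
    iterCommutator g (g * h) n k =
      ∑ i ∈ range (k + 1), k.choose i • (derivative^[k - i] g * iterCommutator g h n i) := by
  simp only [iterCommutator, mul_sum, smul_sum]
  rw [sum_comm]
  refine sum_congr rfl fun p _ => ?_
  rw [show g ^ p.2 * (g * h) = g * (g ^ p.2 * h) by ring, iterate_derivative_mul, mul_sum, mul_sum]
  refine sum_congr rfl fun i _ => ?_
  simp only [nsmul_eq_mul]
  ring

/-- `D^k` is a differential operator of order `k`, so `n > k` brackets with `g` kill it. -/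
theorem iterCommutator_eq_zero (g h : S[X]) {n k : ℕ} (hkn : k < n) :
    iterCommutator g h n k = 0 := by
  induction n generalizing k h with
  | zero => omega
  | succ n ih =>
    rw [iterCommutator_succ, iterCommutator_mul, sum_range_succ, Nat.choose_self, Nat.sub_self,
      one_smul, Function.iterate_zero_apply, add_sub_cancel_right]
    exact sum_eq_zero fun i hi => by
      rw [ih h ((mem_range.mp hi).trans_le (Nat.le_of_lt_succ hkn)), mul_zero, smul_zero]

theorem iterate_derivative_pow_succ_mul_eq_neg_sum (g h : S[X]) (m : ℕ) :
    derivative^[m] (g ^ (m + 1) * h) =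
      -∑ p ∈ antidiagonal m, ((m + 1).choose (p.1 + 1) : S[X]) *
        ((-1) ^ (p.1 + 1) * g ^ (p.1 + 1) * derivative^[m] (g ^ p.2 * h)) := by
  have hcomm := iterCommutator_eq_zero g h (Nat.lt_succ_self m)
  rw [iterCommutator, Nat.sum_antidiagonal_succ] at hcomm
  simp only [Nat.choose_zero_right, Nat.cast_one, pow_zero, one_mul] at hcomm
  exact eq_neg_of_add_eq_zero_left hcomm

end IterCommutator

theorem neg_one_pow_div_factorial_mul_factorial (i j : ℕ) :
    (-1 : ℚ) ^ j / (i ! * j !) = (-1) ^ (i + j) / (i + j)! * ((-1) ^ i * (i + j).choose i) := by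
  rw [Nat.cast_add_choose, pow_add]
  field_simp
  rw [← pow_mul, pow_mul']
  norm_num

theorem iterate_derivative_pow_succ {R : Type*} [CommRing R] (U : R[X]) (n m : ℕ) :
    derivative^[m + 1] (U ^ (n + 1)) =
      C ((n + 1 : ℕ) : R) * derivative^[m] (U ^ n * derivative U) := by
  rw [Function.iterate_succ_apply, derivative_pow_succ, mul_assoc, iterate_derivative_C_mul,
    Nat.cast_succ]

theorem vpoly_eq_C_mul_iterate_derivative {R : Type*} [CommRing R] [Algebra ℚ R] (b : ℕ)
    (U : R[X]) (m : ℕ) :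
    vpoly b U m =
      C (algebraMap ℚ R ((-1) ^ m / (m ! * (b * m + 1 : ℕ)))) *
        derivative^[m] (U ^ (b * m + 1)) := by
  induction m using Nat.strong_induction_on with | _ m ih => ?_
  rcases m with _ | m
  · simp [vpoly]
  set g := U ^ b
  have hterm : ∀ p ∈ antidiagonal m,
      C (algebraMap ℚ R (1 / (p.1 + 1)! : ℚ)) * U ^ (b * (p.1 + 1)) *
          derivative^[p.1 + 1] (vpoly b U p.2) =
        C (algebraMap ℚ R ((-1) ^ p.2 / ((p.1 + 1)! * p.2 !))) *
          (g ^ (p.1 + 1) * derivative^[m] (g ^ p.2 * derivative U)) := by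
    intro p hp
    rw [HasAntidiagonal.mem_antidiagonal] at hp
    rw [ih p.2 (by omega), iterate_derivative_C_mul, ← Function.iterate_add_apply,
      show p.1 + 1 + p.2 = m + 1 by omega, iterate_derivative_pow_succ, pow_mul, pow_mul]
    have hc : (1 / (p.1 + 1)! : ℚ) * ((-1) ^ p.2 / (p.2 ! * (b * p.2 + 1 : ℕ))) *
        (b * p.2 + 1 : ℕ) = (-1) ^ p.2 / ((p.1 + 1)! * p.2 !) := by
      field_simp
    rw [← hc]
    simp only [map_mul, map_natCast]
    ring
  rw [vpoly, ← Nat.sum_antidiagonal_eq_sum_range_succ (fun i j =>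
      C (algebraMap ℚ R (1 / (i + 1)! : ℚ)) * U ^ (b * (i + 1)) *
          derivative^[i + 1] (vpoly b U j)), sum_congr rfl hterm]
  rw [iterate_derivative_pow_succ, pow_mul, iterate_derivative_pow_succ_mul_eq_neg_sum, mul_neg,
    mul_neg, neg_inj, mul_sum, mul_sum]
  refine sum_congr rfl fun p hp => ?_
  rw [HasAntidiagonal.mem_antidiagonal] at hp
  have hr : ((-1) ^ (m + 1) / ((m + 1)! * (b * (m + 1) + 1 : ℕ)) : ℚ) *
      (b * (m + 1) + 1 : ℕ) = (-1) ^ (m + 1) / (m + 1)! := by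
    field_simp
  have hc : (-1 : ℚ) ^ p.2 / ((p.1 + 1)! * p.2 !) =
      (-1) ^ (m + 1) / ((m + 1)! * (b * (m + 1) + 1 : ℕ)) * (b * (m + 1) + 1 : ℕ) *
        ((-1) ^ (p.1 + 1) * (m + 1).choose (p.1 + 1)) := by
    rw [hr, neg_one_pow_div_factorial_mul_factorial, show p.1 + 1 + p.2 = m + 1 by omega]
  rw [hc]
  simp only [map_mul, map_natCast, map_pow, map_neg, map_one]
  ring

section CoeffPow

variable {A σ : Type*} [CommSemiring A] [SetLike σ A] [SubsemiringClass σ A] {S : σ}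
  {P : A[X]} {a : ℕ}

theorem coeff_pow_mul_coeff_eq_zero (hP : P.natDegree ≤ a) {N i j : ℕ}
    (h : a * N < i ∨ a < j) :
    (P ^ N).coeff i * P.coeff j = 0 := by
  rcases h with h | h
  · have hdeg : (P ^ N).natDegree < i :=
      (natDegree_pow_le_of_le N hP).trans_lt (by rwa [mul_comm])
    rw [coeff_eq_zero_of_natDegree_lt hdeg, zero_mul]
  · rw [coeff_eq_zero_of_natDegree_lt (hP.trans_lt h), mul_zero]

theorem coeff_pow_mem_of_coeff_mem (hP : P.natDegree ≤ a) {k : ℕ}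
    (hS : ∀ i, a ≤ i + k → P.coeff i ∈ S) (N : ℕ) {l : ℕ} (hl : a * N ≤ l + k) :
    (P ^ N).coeff l ∈ S := by
  induction N generalizing l with
  | zero =>
    rw [pow_zero, coeff_one]
    split_ifs
    exacts [one_mem S, zero_mem S]
  | succ N ih =>
    rw [pow_succ, coeff_mul]
    refine sum_mem fun ⟨i, j⟩ hij => ?_
    rw [HasAntidiagonal.mem_antidiagonal] at hij
    by_cases h : a * N < i ∨ a < j
    · rw [coeff_pow_mul_coeff_eq_zero hP h]
      exact zero_mem S
    · rw [mul_add, mul_one] at hl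
      exact mul_mem (ih (by omega)) (hS j (by omega))

theorem exists_coeff_pow_mul_sub_eq (hP : P.natDegree ≤ a) {k : ℕ} (hk : 0 < k) (hka : k ≤ a)
    (hS : ∀ i, a < i + k → P.coeff i ∈ S) {N : ℕ} (hN : 0 < N) :
    ∃ Q ∈ S, (P ^ N).coeff (a * N - k) = N * (P.coeff a ^ (N - 1) * P.coeff (a - k)) + Q := by
  induction N, hN using Nat.le_induction with
  | base => exact ⟨0, zero_mem S, by simp⟩
  | succ N hN ih =>
    obtain ⟨Q, hQ, hcoeff⟩ := ih
    have hNa : a ≤ a * N := Nat.le_mul_of_pos_right a hN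
    have hmul : a * (N + 1) = a * N + a := by ring
    have hlead : (a * N - k, a) ∈ antidiagonal (a * (N + 1) - k) := by
      rw [HasAntidiagonal.mem_antidiagonal]; omega
    have hnext : (a * N, a - k) ∈ (antidiagonal (a * (N + 1) - k)).erase (a * N - k, a) := by
      rw [mem_erase, HasAntidiagonal.mem_antidiagonal, Ne, Prod.mk.injEq]; omega
    have hrest :
        ∀ p ∈ ((antidiagonal (a * (N + 1) - k)).erase (a * N - k, a)).erase (a * N, a - k),
          (P ^ N).coeff p.1 * P.coeff p.2 ∈ S := by
      rintro ⟨i, j⟩ hij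
      simp only [mem_erase, HasAntidiagonal.mem_antidiagonal, Ne, Prod.mk.injEq] at hij
      by_cases h : a * N < i ∨ a < j
      · rw [coeff_pow_mul_coeff_eq_zero hP h]
        exact zero_mem S
      · exact mul_mem (coeff_pow_mem_of_coeff_mem hP (k := k - 1) (fun i hi => hS i (by omega)) N
          (by omega)) (hS j (by omega))
    refine ⟨Q * P.coeff a + _, add_mem (mul_mem hQ (hS a (by omega))) (sum_mem hrest), ?_⟩
    have htop : (P ^ N).coeff (a * N) = P.coeff a ^ N := by
      rw [mul_comm]
      exact coeff_pow_of_natDegree_le hP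
    have hpow : P.coeff a ^ N = P.coeff a ^ (N - 1) * P.coeff a := by
      rw [← pow_succ, Nat.sub_add_cancel hN]
    rw [pow_succ, coeff_mul, ← add_sum_erase _ _ hlead, ← add_sum_erase _ _ hnext, hcoeff, htop,
      Nat.add_sub_cancel, hpow]
    push_cast
    ring

end CoeffPow

section Upoly

theorem u_self_ne_zero (a : ℕ) : u a a ≠ 0 := by
  simpa [u] using (LaurentPolynomial.isUnit_T 1).ne_zero

theorem Upoly_coeff (a i : ℕ) : (Upoly a).coeff i = if i ≤ a then u a i else 0 := by
  simp only [Upoly, finsetSum_coeff, coeff_C_mul_X_pow]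
  rw [sum_ite_eq]
  simp only [mem_range, Nat.lt_succ_iff]

theorem Upoly_natDegree_le (a : ℕ) : (Upoly a).natDegree ≤ a := by
  rw [natDegree_le_iff_coeff_eq_zero]
  intro i hi
  rw [Upoly_coeff, if_neg (by omega)]

theorem coeff_Upoly_pow_mul (a N : ℕ) : (Upoly a ^ N).coeff (a * N) = u a a ^ N := by
  rw [mul_comm, coeff_pow_of_natDegree_le (Upoly_natDegree_le a), Upoly_coeff, if_pos le_rfl]

theorem Upoly_coeff_mem_adjoin {a k i : ℕ} (hka : k ≤ a) (hi : a < i + k) :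
    (Upoly a).coeff i ∈ Algebra.adjoin ℂ (u a '' {j : ℕ | a - k + 1 ≤ j ∧ j ≤ a}) := by
  rw [Upoly_coeff]
  split_ifs with h
  · exact Algebra.subset_adjoin ⟨i, ⟨by omega, h⟩, rfl⟩
  · exact zero_mem _

end Upoly

theorem coeff_C_mul_iterate_derivative {R : Type*} [CommRing R] [Algebra ℚ R] (r : ℚ) (p : R[X])
    (m l : ℕ) :
    (C (algebraMap ℚ R r) * derivative^[m] p).coeff l =
      algebraMap ℚ R (r * (l + m).descFactorial m) * p.coeff (l + m) := by
  rw [coeff_C_mul, coeff_iterate_derivative, nsmul_eq_mul, map_mul, map_natCast, mul_assoc]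

theorem zsmul_vpoly_eq {R : Type*} [CommRing R] [Algebra ℚ R] (b : ℕ) (U : R[X]) (m : ℕ) :
    ((-1 : ℤ) ^ m * (m ! : ℤ)) • vpoly b U m =
      C (algebraMap ℚ R (1 / (b * m + 1 : ℕ))) * derivative^[m] (U ^ (b * m + 1)) := by
  rw [vpoly_eq_C_mul_iterate_derivative, zsmul_eq_mul, ← C_eq_intCast, ← mul_assoc, ← C_mul,
    ← map_intCast (algebraMap ℚ R), ← map_mul]
  congr 3
  have hsq : ((-1 : ℚ) ^ m) ^ 2 = 1 := by rw [← pow_mul, pow_mul']; norm_num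
  push_cast
  field_simp
  linear_combination hsq

theorem isTriangular_C_mul_iterate_derivative_Upoly_pow (a m N : ℕ) (hN : 0 < N)
    (hmN : a + m ≤ a * N) :
    IsTriangular a N (a * N - m) (C (algebraMap ℚ _ (1 / N)) * derivative^[m] (Upoly a ^ N)) := by
  have hNq : (N : ℚ) ≠ 0 := by positivity
  have hq : ∀ n, m ≤ n → 0 < 1 / (N : ℚ) * n.descFactorial m := fun n hn =>
    mul_pos (by positivity) (by exact_mod_cast Nat.descFactorial_pos.mpr hn)
  have htop : (C (algebraMap ℚ _ (1 / N)) * derivative^[m] (Upoly a ^ N)).coeff (a * N - m) =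
      algebraMap ℚ _ (1 / N * (a * N).descFactorial m) * u a a ^ N := by
    rw [coeff_C_mul_iterate_derivative, Nat.sub_add_cancel (by omega), coeff_Upoly_pow_mul]
  refine ⟨le_antisymm ?_ (le_natDegree_of_ne_zero ?_), by omega,
    ⟨_, hq (a * N) (by omega), htop⟩, ?_⟩
  · exact (natDegree_C_mul_le _ _).trans <| (natDegree_iterate_derivative _ m).trans <|
      Nat.sub_le_sub_right ((natDegree_pow_le_of_le N (Upoly_natDegree_le a)).trans_eq
        (mul_comm N a)) m
  · rw [htop]
    refine mul_ne_zero ?_ (pow_ne_zero _ (u_self_ne_zero a))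
    rw [Ne, map_eq_zero_iff _ (algebraMap ℚ _).injective]
    exact (hq _ (by omega)).ne'
  · intro l hl hld
    set k := a * N - m - l
    obtain ⟨Q, hQ, hcoeff⟩ := exists_coeff_pow_mul_sub_eq (Upoly_natDegree_le a) (k := k)
      (by omega) (by omega) (fun i => Upoly_coeff_mem_adjoin (by omega)) hN
    rw [Upoly_coeff, Upoly_coeff, if_pos le_rfl, if_pos (Nat.sub_le a k)] at hcoeff
    refine ⟨(l + m).descFactorial m, algebraMap ℚ _ (1 / N * (l + m).descFactorial m) * Q,
      by exact_mod_cast Nat.descFactorial_pos.mpr le_add_self, ?_, ?_⟩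
    · refine mul_mem ?_ hQ
      rw [IsScalarTower.algebraMap_apply ℚ ℂ]
      exact Subalgebra.algebraMap_mem _ _
    · have hscale : algebraMap ℚ (LaurentRing a) (1 / N * (l + m).descFactorial m) * N =
          algebraMap ℚ _ ((l + m).descFactorial m) := by
        rw [← map_natCast (algebraMap ℚ (LaurentRing a)) N, ← map_mul]
        field_simp
      rw [show a * N - k = l + m by omega] at hcoeff
      rw [coeff_C_mul_iterate_derivative, hcoeff]
      linear_combination (u a a ^ (N - 1) * u a (a - k)) * hscale

/-- for `a, b ≥ 2` and every `m ≥ 0`, the polynomial `(−1)^m·m!·v_m(Y)` is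
`(bm+1)`-triangular of degree `(ab−1)m + a`. -/
theorem vpoly_isTriangular (a b : ℕ) (ha : 2 ≤ a) (hb : 2 ≤ b) (m : ℕ) :
    IsTriangular a (b * m + 1) ((a * b - 1) * m + a)
      (((-1 : ℤ) ^ m * (m.factorial : ℤ)) • vpoly b (Upoly a) m) := by
  have hm : m ≤ a * b * m := Nat.le_mul_of_pos_left m (by positivity)
  have hexpand : a * (b * m + 1) = a * b * m + a := by ring
  have hd : (a * b - 1) * m + a = a * (b * m + 1) - m := by
    rw [Nat.sub_mul, one_mul]
    omega
  rw [zsmul_vpoly_eq, hd]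
  exact isTriangular_C_mul_iterate_derivative_Upoly_pow a m _ (Nat.succ_pos _) (by omega)
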